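/- arXiv:2103.02754 — 11 statements merged into one kernel-verified Lean document; each statement's English description precedes it below -/
import Mathlib

section
/- Suppose u : A × Ω → ℝ has single-crossing differences: for all a, a' ∈ A, the map ω ↦ u(a,ω) − u(a',ω) is single crossing. Then for any finite choice set, any states ω1 < ω2 < ω3, and any action a, if a is the unique maximizer of u(·, ω1) and the unique maximizer of u(·, ω3), then a is a maximizer of u(·, ω2). -/
def SingleCrossingFn {X : Type*} [LinearOrder X] (h : X → ℝ) : Prop :=
  (∀ x x', x < x' → h x > 0 → h x' ≥ 0) ∨ (∀ x x', x < x' → h x < 0 → h x' ≤ 0)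

/-- Single-crossing differences: all pairwise utility differences are single crossing. -/
def SCD {A : Type*} (u : A → ℤ → ℝ) : Prop :=
  ∀ a a', SingleCrossingFn (fun ω => u a ω - u a' ω)

theorem stmt1 {A : Type*} [Fintype A] (u : A → ℤ → ℝ) (hscd : SCD u)
    (ω1 ω2 ω3 : ℤ) (h12 : ω1 < ω2) (h23 : ω2 < ω3) (a : A)
    (h1 : ∀ b, b ≠ a → u b ω1 < u a ω1)
    (h3 : ∀ b, b ≠ a → u b ω3 < u a ω3) :
    ∀ b, u b ω2 ≤ u a ω2 := by
  intro b
  by_cases hb : b = a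
  · simp [hb]
  · have H := hscd a b
    have hp1 : u a ω1 - u b ω1 > 0 := by linarith [h1 b hb]
    have hp3 : u a ω3 - u b ω3 > 0 := by linarith [h3 b hb]
    rcases H with H | H
    · have := H ω1 ω2 h12 hp1
      simp only [ge_iff_le, sub_nonneg] at this
      linarith
    · by_contra hc
      push_neg at hc
      have := H ω2 ω3 h23 (by simpa using sub_neg.mpr hc)
      simp at this
      linarith
end

section
/- Suppose the signal structure f satisfies DUB. Then for every state ω, every ε > 0, and every probability mass function μ on Ω with μ(ω) > 0, there exists an index N such that for all i ≥ N, (∑_{ω' < ω} μ(ω') f(s̄_i | ω')) / (μ(ω) f(s̄_i | ω)) < ε, where (s̄_i) is the sequence from DUB's definition for ω. That is, DUB implies directional distinguishability from below, uniformly in the prior. -/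
open Filter Topology

theorem stmt3 {S : Type*} (f : S → ℤ → ℝ) (hpos : ∀ s ω, 0 < f s ω)
    (ω : ℤ) (C : ℝ) (hC : 0 < C) (sbar : ℕ → S)
    -- the sequence (s̄_i) from DUB's definition for state ω:
    (hlim : ∀ ω' < ω, Tendsto (fun i => f (sbar i) ω' / f (sbar i) ω) atTop (𝓝 0))
    (hbdd : ∀ ω' < ω, ∀ i, f (sbar i) ω' / f (sbar i) ω < C)
    -- any prior (probability mass function) putting positive mass on ω:
    (μ : ℤ → ℝ) (hμ0 : ∀ ω', 0 ≤ μ ω') (hμ1 : ∑' ω', μ ω' = 1) (hμω : 0 < μ ω)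
    (ε : ℝ) (hε : 0 < ε) :
    ∃ N : ℕ, ∀ i ≥ N,
      (∑' ω' : {x : ℤ // x < ω}, μ ω' * f (sbar i) ω') / (μ ω * f (sbar i) ω) < ε := by
  have hsum : Summable μ := by
    by_contra h
    rw [tsum_eq_zero_of_not_summable h] at hμ1
    norm_num at hμ1
  have hbound : Summable (fun ω' : {x : ℤ // x < ω} => C * (μ ω' / μ ω)) :=
    (((hsum.subtype _).div_const _).mul_left _)
  have hT : Tendsto (fun i => ∑' ω' : {x : ℤ // x < ω},
      μ ω' * f (sbar i) ω' / (μ ω * f (sbar i) ω)) atTop (𝓝 0) := by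
    have h := tendsto_tsum_of_dominated_convergence
      (f := fun i (ω' : {x : ℤ // x < ω}) => μ ω' * f (sbar i) ω' / (μ ω * f (sbar i) ω))
      (g := fun _ => (0 : ℝ)) (𝓕 := atTop) hbound ?_ ?_
    · simpa using h
    · intro ω'
      have h0 : Tendsto (fun i => μ (ω' : ℤ) / μ ω * (f (sbar i) ω' / f (sbar i) ω))
          atTop (𝓝 (μ (ω' : ℤ) / μ ω * 0)) := (hlim ω' ω'.2).const_mul _
      simpa [mul_div_mul_comm] using h0
    · filter_upwards with i ω'
      rw [mul_div_mul_comm, Real.norm_eq_abs, abs_of_nonneg (mul_nonneg (div_nonneg (hμ0 _) hμω.le) (div_nonneg (hpos _ _).le (hpos _ _).le))]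
      rw [mul_comm C]
      exact mul_le_mul_of_nonneg_left (le_of_lt (hbdd ω' ω'.2 i)) (div_nonneg (hμ0 _) hμω.le)
  have hev := hT.eventually_lt_const hε
  rw [eventually_atTop] at hev
  obtain ⟨N, hN⟩ := hev
  refine ⟨N, fun i hi => ?_⟩
  rw [← tsum_div_const]
  exact hN i hi
end

section
/- If Ω is finite and the signal structure has directional distinguishability, then it has DUB. Specifically, if for every ω and every belief μ with support contained in {ω' : ω' ≤ ω} and μ(ω) > 0 there exists a sequence of signals making the posterior likelihood ratio of {ω' < ω} to ω tend to zero (and symmetrically for upper sets), then DUB holds. -/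
open Filter Topology

private lemma bdd_of_tendsto_zero (g : ℕ → ℝ) (h : Tendsto g atTop (𝓝 0)) :
    ∃ C > (0 : ℝ), ∀ i, g i < C := by
  obtain ⟨N, hN⟩ := (eventually_atTop).mp (h.eventually (gt_mem_nhds (zero_lt_one)))
  have hne : (Finset.range (N + 1)).Nonempty := ⟨0, by simp⟩
  refine ⟨max 1 ((Finset.range (N + 1)).sup' hne g) + 1, by positivity, fun i => ?_⟩
  rcases le_or_gt i N with hi | hi
  · have : g i ≤ (Finset.range (N + 1)).sup' hne g :=
      Finset.le_sup' g (Finset.mem_range.mpr (by omega))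
    have : g i ≤ max 1 ((Finset.range (N + 1)).sup' hne g) :=
      this.trans (le_max_right _ _)
    linarith
  · have : g i < 1 := hN i (by omega)
    have h1 : (1 : ℝ) ≤ max 1 ((Finset.range (N + 1)).sup' hne g) := le_max_left _ _
    linarith

theorem stmt4 {Ω S : Type*} [Fintype Ω] [LinearOrder Ω] [DecidableEq Ω]
    (f : S → Ω → ℝ) (hpos : ∀ s ω, 0 < f s ω)
    -- every ω is distinguishable from its lower set, given priors supported below ω:
    (hlow : ∀ ω : Ω, ∀ μ : Ω → ℝ, (∀ ω', 0 ≤ μ ω') → (∑ ω', μ ω') = 1 →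
      0 < μ ω → (∀ ω', ω < ω' → μ ω' = 0) →
      ∃ s : ℕ → S, Tendsto
        (fun i => (∑ ω' ∈ Finset.univ.filter (fun x => x < ω), μ ω' * f (s i) ω') /
          (μ ω * f (s i) ω)) atTop (𝓝 0))
    -- and symmetrically from its upper set:
    (hhigh : ∀ ω : Ω, ∀ μ : Ω → ℝ, (∀ ω', 0 ≤ μ ω') → (∑ ω', μ ω') = 1 →
      0 < μ ω → (∀ ω', ω' < ω → μ ω' = 0) →
      ∃ s : ℕ → S, Tendsto
        (fun i => (∑ ω' ∈ Finset.univ.filter (fun x => ω < x), μ ω' * f (s i) ω') /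
          (μ ω * f (s i) ω)) atTop (𝓝 0)) :
    -- DUB:
    ∀ ω : Ω, ∃ C > (0 : ℝ), ∃ sbar sund : ℕ → S,
      (∀ ω' < ω, Tendsto (fun i => f (sbar i) ω' / f (sbar i) ω) atTop (𝓝 0) ∧
        ∀ i, f (sbar i) ω' / f (sbar i) ω < C) ∧
      (∀ ω' > ω, Tendsto (fun i => f (sund i) ω' / f (sund i) ω) atTop (𝓝 0) ∧
        ∀ i, f (sund i) ω' / f (sund i) ω < C) := by
  classical
  intro ω
  -- low side
  have Hlow : ∃ s : ℕ → S, ∀ ω' < ω,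
      Tendsto (fun i => f (s i) ω' / f (s i) ω) atTop (𝓝 0) := by
    set k : ℝ := ((Finset.univ.filter (fun x => x ≤ ω)).card : ℝ) with hkdef
    have hk : 0 < k := by
      have : ω ∈ Finset.univ.filter (fun x => x ≤ ω) := by simp
      rw [hkdef]; exact_mod_cast Finset.card_pos.mpr ⟨ω, this⟩
    set μ : Ω → ℝ := fun x => if x ≤ ω then k⁻¹ else 0 with hμ
    have hμnn : ∀ x, 0 ≤ μ x := by
      intro x; simp only [hμ]; split <;> positivity
    have hμsum : (∑ x, μ x) = 1 := by
      simp only [hμ]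
      rw [Finset.sum_ite, Finset.sum_const, Finset.sum_const, smul_zero, add_zero,
        nsmul_eq_mul]
      exact mul_inv_cancel₀ hk.ne'
    have hμω : 0 < μ ω := by simp only [hμ, if_pos le_rfl]; positivity
    have hμzero : ∀ ω', ω < ω' → μ ω' = 0 := fun ω' h => if_neg (not_le.mpr h)
    obtain ⟨s, hs⟩ := hlow ω μ hμnn hμsum hμω hμzero
    have key : ∀ i,
        (∑ ω' ∈ Finset.univ.filter (fun x => x < ω), μ ω' * f (s i) ω') /
          (μ ω * f (s i) ω)
        = (∑ ω' ∈ Finset.univ.filter (fun x => x < ω), f (s i) ω') / f (s i) ω := by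
      intro i
      have h1 : ∀ x ∈ Finset.univ.filter (fun x => x < ω),
          μ x * f (s i) x = k⁻¹ * f (s i) x := by
        intro x hx
        have : x < ω := (Finset.mem_filter.mp hx).2
        simp [hμ, this.le]
      rw [Finset.sum_congr rfl h1, ← Finset.mul_sum]
      have : μ ω = k⁻¹ := if_pos le_rfl
      rw [this, mul_div_mul_left _ _ (inv_ne_zero hk.ne')]
    have hs' : Tendsto
        (fun i => (∑ ω' ∈ Finset.univ.filter (fun x => x < ω), f (s i) ω') / f (s i) ω)
        atTop (𝓝 0) := hs.congr key
    refine ⟨s, fun ω' hω' => ?_⟩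
    refine squeeze_zero (fun i => div_nonneg (hpos _ _).le (hpos _ _).le) (fun i => ?_) hs'
    have hmem : ω' ∈ Finset.univ.filter (fun x => x < ω) := by simp [hω']
    have hle : f (s i) ω' ≤ ∑ x ∈ Finset.univ.filter (fun x => x < ω), f (s i) x :=
      Finset.single_le_sum (fun x _ => (hpos (s i) x).le) hmem
    exact div_le_div_of_nonneg_right hle (hpos (s i) ω).le
  -- high side
  have Hhigh : ∃ s : ℕ → S, ∀ ω' > ω,
      Tendsto (fun i => f (s i) ω' / f (s i) ω) atTop (𝓝 0) := by
    set k : ℝ := ((Finset.univ.filter (fun x => ω ≤ x)).card : ℝ) with hkdef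
    have hk : 0 < k := by
      have : ω ∈ Finset.univ.filter (fun x => ω ≤ x) := by simp
      rw [hkdef]; exact_mod_cast Finset.card_pos.mpr ⟨ω, this⟩
    set μ : Ω → ℝ := fun x => if ω ≤ x then k⁻¹ else 0 with hμ
    have hμnn : ∀ x, 0 ≤ μ x := by
      intro x; simp only [hμ]; split <;> positivity
    have hμsum : (∑ x, μ x) = 1 := by
      simp only [hμ]
      rw [Finset.sum_ite, Finset.sum_const, Finset.sum_const, smul_zero, add_zero,
        nsmul_eq_mul]
      exact mul_inv_cancel₀ hk.ne'
    have hμω : 0 < μ ω := by simp only [hμ, if_pos le_rfl]; positivity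
    have hμzero : ∀ ω', ω' < ω → μ ω' = 0 := fun ω' h => if_neg (not_le.mpr h)
    obtain ⟨s, hs⟩ := hhigh ω μ hμnn hμsum hμω hμzero
    have key : ∀ i,
        (∑ ω' ∈ Finset.univ.filter (fun x => ω < x), μ ω' * f (s i) ω') /
          (μ ω * f (s i) ω)
        = (∑ ω' ∈ Finset.univ.filter (fun x => ω < x), f (s i) ω') / f (s i) ω := by
      intro i
      have h1 : ∀ x ∈ Finset.univ.filter (fun x => ω < x),
          μ x * f (s i) x = k⁻¹ * f (s i) x := by
        intro x hx
        have : ω < x := (Finset.mem_filter.mp hx).2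
        simp [hμ, this.le]
      rw [Finset.sum_congr rfl h1, ← Finset.mul_sum]
      have : μ ω = k⁻¹ := if_pos le_rfl
      rw [this, mul_div_mul_left _ _ (inv_ne_zero hk.ne')]
    have hs' : Tendsto
        (fun i => (∑ ω' ∈ Finset.univ.filter (fun x => ω < x), f (s i) ω') / f (s i) ω)
        atTop (𝓝 0) := hs.congr key
    refine ⟨s, fun ω' hω' => ?_⟩
    refine squeeze_zero (fun i => div_nonneg (hpos _ _).le (hpos _ _).le) (fun i => ?_) hs'
    have hmem : ω' ∈ Finset.univ.filter (fun x => ω < x) := by simp [hω']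
    have hle : f (s i) ω' ≤ ∑ x ∈ Finset.univ.filter (fun x => ω < x), f (s i) x :=
      Finset.single_le_sum (fun x _ => (hpos (s i) x).le) hmem
    exact div_le_div_of_nonneg_right hle (hpos (s i) ω).le
  obtain ⟨sbar, hsbar⟩ := Hlow
  obtain ⟨sund, hsund⟩ := Hhigh
  -- bounds
  have hB : ∀ ω' : Ω, ∃ C > (0 : ℝ),
      (ω' < ω → ∀ i, f (sbar i) ω' / f (sbar i) ω < C) ∧
      (ω < ω' → ∀ i, f (sund i) ω' / f (sund i) ω < C) := by
    intro ω'
    rcases lt_trichotomy ω' ω with h | h | h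
    · obtain ⟨C, hC0, hC⟩ := bdd_of_tendsto_zero _ (hsbar ω' h)
      exact ⟨C, hC0, fun _ => hC, fun h' => absurd h' (not_lt.mpr h.le)⟩
    · exact ⟨1, zero_lt_one, fun h' => absurd h' (by simp [h]),
        fun h' => absurd h' (by simp [h])⟩
    · obtain ⟨C, hC0, hC⟩ := bdd_of_tendsto_zero _ (hsund ω' h)
      exact ⟨C, hC0, fun h' => absurd h' (not_lt.mpr h.le), fun _ => hC⟩
  choose B hB0 hB1 hB2 using hB
  have hne : (Finset.univ : Finset Ω).Nonempty := ⟨ω, Finset.mem_univ ω⟩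
  refine ⟨Finset.univ.sup' hne B, lt_of_lt_of_le (hB0 ω) (Finset.le_sup' B (Finset.mem_univ ω)),
    sbar, sund, fun ω' hω' => ⟨hsbar ω' hω', fun i =>
      lt_of_lt_of_le (hB1 ω' hω' i) (Finset.le_sup' B (Finset.mem_univ ω'))⟩,
    fun ω' hω' => ⟨hsund ω' hω', fun i =>
      lt_of_lt_of_le (hB2 ω' hω' i) (Finset.le_sup' B (Finset.mem_univ ω'))⟩⟩
end

section
/- If the signal structure satisfies the monotone likelihood ratio property and pairwise unbounded beliefs, then it satisfies universal DUB: there exist signal sequences (s̄_i) and (s̲_i) such that for every ω and every ω' < ω, f(s̄_i|ω')/f(s̄_i|ω) → 0, and for every ω' > ω, f(s̲_i|ω')/f(s̲_i|ω) → 0. -/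
open Filter Topology

theorem stmt6 {Ω S : Type*} [Fintype Ω] [LinearOrder Ω] [LinearOrder S] [Nonempty S]
    (f : S → Ω → ℝ) (hpos : ∀ s ω, 0 < f s ω)
    -- MLRP:
    (hmlrp : ∀ ω ω' : Ω, ω < ω' → ∀ s s' : S, s < s' →
      f s ω' / f s ω ≤ f s' ω' / f s' ω)
    -- pairwise unbounded beliefs:
    (hpub : ∀ ω ω' : Ω, ω' ≠ ω → ∃ s : ℕ → S,
      Tendsto (fun i => f (s i) ω' / f (s i) ω) atTop (𝓝 0)) :
    -- universal DUB:
    ∃ sbar sund : ℕ → S, ∀ ω : Ω,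
      (∀ ω' < ω, Tendsto (fun i => f (sbar i) ω' / f (sbar i) ω) atTop (𝓝 0)) ∧
      (∀ ω' > ω, Tendsto (fun i => f (sund i) ω' / f (sund i) ω) atTop (𝓝 0)) := by
  -- monotone version of MLRP (≤ on signals)
  have hmlrp' : ∀ ω ω' : Ω, ω < ω' → ∀ s s' : S, s ≤ s' →
      f s ω' / f s ω ≤ f s' ω' / f s' ω := by
    intro ω ω' h s s' hss
    rcases eq_or_lt_of_le hss with rfl | hlt
    · exact le_refl _
    · exact hmlrp ω ω' h s s' hlt
  -- reversed: for ω' < ω the ratio f s ω' / f s ω is nonincreasing in s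
  have hmono : ∀ ω' ω : Ω, ω' < ω → ∀ s s' : S, s ≤ s' →
      f s' ω' / f s' ω ≤ f s ω' / f s ω := by
    intro ω' ω h s s' hss
    have h1 := hmlrp' ω' ω h s s' hss
    rw [div_le_div_iff₀ (hpos s ω') (hpos s' ω')] at h1
    rw [div_le_div_iff₀ (hpos s' ω) (hpos s ω)]
    linarith [h1]
  -- for each distinct pair and each i, a signal with small ratio
  have key : ∀ (a b : Ω), a ≠ b → ∀ i : ℕ, ∃ s : S, f s a / f s b < 1 / (i + 1) := by
    intro a b hab i
    obtain ⟨t, ht⟩ := hpub b a hab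
    have hev : ∀ᶠ j in atTop, f (t j) a / f (t j) b < 1 / (i + 1) :=
      ht.eventually (gt_mem_nhds (by positivity))
    obtain ⟨j, hj⟩ := hev.exists
    exact ⟨t j, hj⟩
  classical
  rcases isEmpty_or_nonempty Ω with hΩ | hΩ
  · exact ⟨fun _ => Classical.arbitrary S, fun _ => Classical.arbitrary S,
      fun ω => (IsEmpty.false ω).elim⟩
  · -- choice of signals per pair
    set g : Ω × Ω → ℕ → S := fun p i =>
      if h : p.1 ≠ p.2 then (key p.1 p.2 h i).choose else Classical.arbitrary S with hg
    have hgspec : ∀ (p : Ω × Ω) (h : p.1 ≠ p.2) (i : ℕ),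
        f (g p i) p.1 / f (g p i) p.2 < 1 / (i + 1) := by
      intro p h i
      simp only [hg, dif_pos h]
      exact (key p.1 p.2 h i).choose_spec
    have hne : (Finset.univ : Finset (Ω × Ω)).Nonempty := Finset.univ_nonempty
    refine ⟨fun i => Finset.univ.sup' hne (fun p => g p i),
            fun i => Finset.univ.inf' hne (fun p => g p i), fun ω => ⟨?_, ?_⟩⟩
    · intro ω' hlt
      have h0 : Tendsto (fun i : ℕ => 1 / ((i : ℝ) + 1)) atTop (𝓝 0) :=
        tendsto_one_div_add_atTop_nhds_zero_nat
      refine tendsto_of_tendsto_of_tendsto_of_le_of_le tendsto_const_nhds h0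
        (fun i => le_of_lt (div_pos (hpos _ _) (hpos _ _))) ?_
      intro i
      have hne' : (ω', ω).1 ≠ (ω', ω).2 := ne_of_lt hlt
      have hle : g (ω', ω) i ≤ Finset.univ.sup' hne (fun p => g p i) :=
        Finset.le_sup' (fun p => g p i) (Finset.mem_univ (ω', ω))
      calc f (Finset.univ.sup' hne (fun p => g p i)) ω' /
              f (Finset.univ.sup' hne (fun p => g p i)) ω
          ≤ f (g (ω', ω) i) ω' / f (g (ω', ω) i) ω := hmono ω' ω hlt _ _ hle
        _ ≤ 1 / (i + 1) := le_of_lt (hgspec (ω', ω) hne' i)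
    · intro ω' hgt
      have h0 : Tendsto (fun i : ℕ => 1 / ((i : ℝ) + 1)) atTop (𝓝 0) :=
        tendsto_one_div_add_atTop_nhds_zero_nat
      refine tendsto_of_tendsto_of_tendsto_of_le_of_le tendsto_const_nhds h0
        (fun i => le_of_lt (div_pos (hpos _ _) (hpos _ _))) ?_
      intro i
      have hne' : (ω', ω).1 ≠ (ω', ω).2 := ne_of_gt hgt
      have hle : Finset.univ.inf' hne (fun p => g p i) ≤ g (ω', ω) i :=
        Finset.inf'_le (fun p => g p i) (Finset.mem_univ (ω', ω))
      calc f (Finset.univ.inf' hne (fun p => g p i)) ω' /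
              f (Finset.univ.inf' hne (fun p => g p i)) ω
          ≤ f (g (ω', ω) i) ω' / f (g (ω', ω) i) ω := hmlrp' ω ω' hgt _ _ hle
        _ ≤ 1 / (i + 1) := le_of_lt (hgspec (ω', ω) hne' i)
end

section
/- If the signal structure satisfies MLRP and there exist three states ω1 < ω2 < ω3, then unbounded beliefs fails: there is no sequence of signals (s_i) such that both f(s_i|ω1)/f(s_i|ω2) → 0 and f(s_i|ω3)/f(s_i|ω2) → 0. -/
open Filter Topology

theorem stmt7 {S : Type*} [LinearOrder S]
    (f : S → ℤ → ℝ) (hpos : ∀ s ω, 0 < f s ω)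
    -- MLRP:
    (hmlrp : ∀ ω ω' : ℤ, ω < ω' → ∀ s s' : S, s < s' →
      f s ω' / f s ω ≤ f s' ω' / f s' ω)
    (ω1 ω2 ω3 : ℤ) (h12 : ω1 < ω2) (h23 : ω2 < ω3) :
    ¬ ∃ s : ℕ → S,
      Tendsto (fun i => f (s i) ω1 / f (s i) ω2) atTop (𝓝 0) ∧
      Tendsto (fun i => f (s i) ω3 / f (s i) ω2) atTop (𝓝 0) := by
  rintro ⟨s, ha, hb⟩
  have ha0 : 0 < f (s 0) ω1 / f (s 0) ω2 := div_pos (hpos _ _) (hpos _ _)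
  have hb0 : 0 < f (s 0) ω3 / f (s 0) ω2 := div_pos (hpos _ _) (hpos _ _)
  have hevA := ha.eventually (gt_mem_nhds ha0)
  have hevB := hb.eventually (gt_mem_nhds hb0)
  obtain ⟨i, hA, hB⟩ := (hevA.and hevB).exists
  -- From hA : f (s i) ω1 / f (s i) ω2 < f (s 0) ω1 / f (s 0) ω2, deduce s 0 < s i
  have hlt : s 0 < s i := by
    by_contra h
    push_neg at h
    rcases lt_or_eq_of_le h with h | h
    · -- s i < s 0 : a is nonincreasing, i.e. f s ω2 / f s ω1 nondecreasing
      have := hmlrp ω1 ω2 h12 (s i) (s 0) h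
      have hAi : 0 < f (s i) ω2 / f (s i) ω1 := div_pos (hpos _ _) (hpos _ _)
      have := one_div_le_one_div_of_le hAi this
      rw [one_div_div, one_div_div] at this
      exact absurd this (not_le.mpr hA)
    · rw [h] at hA; exact lt_irrefl _ hA
  have := hmlrp ω2 ω3 h23 (s 0) (s i) hlt
  exact absurd this (not_le.mpr hB)
end

section
/- Under MLRP, for any full-support prior μ on a countable state space and any two non-equivalent signals s < s', the posterior after s' strictly first-order stochastically dominates the posterior after s: for every ω strictly below the supremum of Ω, ∑_{ω' ≤ ω} μ_s(ω') > ∑_{ω' ≤ ω} μ_{s'}(ω'), where μ_s(ω) = μ(ω)f(s|ω) / ∑_{ω''} μ(ω'')f(s|ω''). -/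
open Filter Topology

theorem stmt8 {Ω S : Type*} [Countable Ω] [LinearOrder Ω] [LinearOrder S]
    (f : S → Ω → ℝ) (hpos : ∀ s ω, 0 < f s ω)
    -- MLRP:
    (hmlrp : ∀ ω ω' : Ω, ω < ω' → ∀ s s' : S, s < s' →
      f s ω' / f s ω ≤ f s' ω' / f s' ω)
    -- full-support prior:
    (μ : Ω → ℝ) (hμpos : ∀ ω, 0 < μ ω) (hμsum : Summable μ) (hμ1 : ∑' ω, μ ω = 1)
    (hfsum : ∀ s : S, Summable (fun ω => μ ω * f s ω))
    (s s' : S) (hss' : s < s')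
    -- s and s' are not equivalent signals:
    (hneq : ¬ ∃ c : ℝ, 0 < c ∧ ∀ ω, f s ω = c * f s' ω) :
    -- strict FOSD of the posterior after s' over the posterior after s:
    ∀ ω : Ω, (∃ ω'', ω < ω'') →
      (∑' ω' : {x : Ω // x ≤ ω}, μ ω' * f s' ω' / ∑' ω'', μ ω'' * f s' ω'') <
      (∑' ω' : {x : Ω // x ≤ ω}, μ ω' * f s ω' / ∑' ω'', μ ω'' * f s ω'') := by
  intro ω hω
  obtain ⟨b1, hb1⟩ := hω
  -- the likelihood ratio
  set l : Ω → ℝ := fun x => f s' x / f s x with hl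
  have hlmono : ∀ x y : Ω, x ≤ y → l x ≤ l y := by
    intro x y hxy
    rcases eq_or_lt_of_le hxy with rfl | hlt
    · exact le_refl _
    · have h1 := hmlrp x y hlt s s' hss'
      rw [div_le_div_iff₀ (hpos s x) (hpos s' x)] at h1
      simp only [hl]
      rw [div_le_div_iff₀ (hpos s x) (hpos s y)]
      linear_combination h1
  -- a strictly increasing pair of the likelihood ratio
  have hpair : ∃ p q : Ω, p < q ∧ l p < l q := by
    by_contra hcon
    push_neg at hcon
    have hconst : ∀ x, l x = l ω := by
      intro x
      rcases lt_trichotomy x ω with hx | rfl | hx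
      · exact le_antisymm (hlmono x ω hx.le) (hcon x ω hx)
      · rfl
      · exact le_antisymm (hcon ω x hx) (hlmono ω x hx.le)
    apply hneq
    refine ⟨f s ω / f s' ω, div_pos (hpos s ω) (hpos s' ω), fun x => ?_⟩
    have hx := hconst x
    simp only [hl] at hx
    rw [div_eq_div_iff (hpos s x).ne' (hpos s ω).ne'] at hx
    rw [div_mul_eq_mul_div, eq_div_iff (hpos s' ω).ne']
    linear_combination -hx
  obtain ⟨p, q, hpq, hlpq⟩ := hpair
  -- produce a pair straddling ω
  obtain ⟨a0, b0, ha0, hb0, hab0⟩ :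
      ∃ a0 b0 : Ω, a0 ≤ ω ∧ ω < b0 ∧ l a0 < l b0 := by
    rcases le_or_gt q ω with hqω | hωq
    · exact ⟨p, b1, hpq.le.trans hqω, hb1,
        lt_of_lt_of_le hlpq (hlmono q b1 (hqω.trans hb1.le))⟩
    · rcases le_or_gt p ω with hpω | hωp
      · exact ⟨p, q, hpω, hωq, hlpq⟩
      · exact ⟨ω, q, le_refl ω, hωq,
          lt_of_le_of_lt (hlmono ω p hωp.le) hlpq⟩
  -- summability facts
  have hGsum := hfsum s
  have hHsum := hfsum s'
  have hAg : Summable (fun a : {x : Ω // x ≤ ω} => μ a * f s a) := hGsum.subtype _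
  have hAh : Summable (fun a : {x : Ω // x ≤ ω} => μ a * f s' a) := hHsum.subtype _
  have hBg : Summable (fun b : {x : Ω // ¬ x ≤ ω} => μ b * f s b) :=
    hGsum.subtype ({x | x ≤ ω}ᶜ)
  have hBh : Summable (fun b : {x : Ω // ¬ x ≤ ω} => μ b * f s' b) :=
    hHsum.subtype ({x | x ≤ ω}ᶜ)
  have hGpos : 0 < ∑' x, μ x * f s x :=
    Summable.tsum_pos hGsum (fun x => (mul_pos (hμpos x) (hpos s x)).le) ω
      (mul_pos (hμpos ω) (hpos s ω))
  have hHpos : 0 < ∑' x, μ x * f s' x :=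
    Summable.tsum_pos hHsum (fun x => (mul_pos (hμpos x) (hpos s' x)).le) ω
      (mul_pos (hμpos ω) (hpos s' ω))
  have hsplitG : (∑' a : {x : Ω // x ≤ ω}, μ a * f s a)
      + (∑' b : {x : Ω // ¬ x ≤ ω}, μ b * f s b) = ∑' x, μ x * f s x :=
    Summable.tsum_add_tsum_compl (s := {x | x ≤ ω}) (hGsum.subtype _) (hGsum.subtype _)
  have hsplitH : (∑' a : {x : Ω // x ≤ ω}, μ a * f s' a)
      + (∑' b : {x : Ω // ¬ x ≤ ω}, μ b * f s' b) = ∑' x, μ x * f s' x :=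
    Summable.tsum_add_tsum_compl (s := {x | x ≤ ω}) (hHsum.subtype _) (hHsum.subtype _)
  -- pointwise comparison
  have hterm : ∀ (a : {x : Ω // x ≤ ω}) (b : {x : Ω // ¬ x ≤ ω}),
      (μ a * f s' a) * (μ b * f s b) ≤ (μ a * f s a) * (μ b * f s' b) := by
    rintro ⟨a, ha⟩ ⟨b, hb⟩
    have hab : a ≤ b := ha.trans (not_le.mp hb).le
    have hlab := hlmono a b hab
    simp only [hl] at hlab
    rw [div_le_div_iff₀ (hpos s a) (hpos s b)] at hlab
    calc (μ a * f s' a) * (μ b * f s b) = (μ a * μ b) * (f s' a * f s b) := by ring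
      _ ≤ (μ a * μ b) * (f s' b * f s a) :=
          mul_le_mul_of_nonneg_left hlab (mul_pos (hμpos a) (hμpos b)).le
      _ = (μ a * f s a) * (μ b * f s' b) := by ring
  have htermlt : (μ a0 * f s' a0) * (μ b0 * f s b0) < (μ a0 * f s a0) * (μ b0 * f s' b0) := by
    have hlab := hab0
    simp only [hl] at hlab
    rw [div_lt_div_iff₀ (hpos s a0) (hpos s b0)] at hlab
    calc (μ a0 * f s' a0) * (μ b0 * f s b0) = (μ a0 * μ b0) * (f s' a0 * f s b0) := by ring
      _ < (μ a0 * μ b0) * (f s' b0 * f s a0) :=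
          mul_lt_mul_of_pos_left hlab (mul_pos (hμpos a0) (hμpos b0))
      _ = (μ a0 * f s a0) * (μ b0 * f s' b0) := by ring
  -- the key: Ah * Bg < Ag * Bh
  have key : (∑' a : {x : Ω // x ≤ ω}, μ a * f s' a) * (∑' b : {x : Ω // ¬ x ≤ ω}, μ b * f s b)
      < (∑' a : {x : Ω // x ≤ ω}, μ a * f s a) * (∑' b : {x : Ω // ¬ x ≤ ω}, μ b * f s' b) := by
    rw [← tsum_mul_left, ← tsum_mul_left]
    refine Summable.tsum_lt_tsum (i := ⟨b0, not_le.mpr hb0⟩) (fun b => ?_) ?_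
      (hBg.mul_left _) (hBh.mul_left _)
    · rw [← tsum_mul_right, ← tsum_mul_right]
      exact Summable.tsum_le_tsum (fun a => hterm a b) (hAh.mul_right _) (hAg.mul_right _)
    · rw [← tsum_mul_right, ← tsum_mul_right]
      exact Summable.tsum_lt_tsum (i := ⟨a0, ha0⟩) (fun a => hterm a _) htermlt
        (hAh.mul_right _) (hAg.mul_right _)
  -- conclude
  rw [tsum_div_const, tsum_div_const, div_lt_div_iff₀ hHpos hGpos, ← hsplitG, ← hsplitH]
  nlinarith [key]
end

section
/- Let g : ℝ → ℝ₊ be a bounded probability density that is strictly subexponential: there exists p > 1 such that g(s) ≤ exp(−|s|^p) for all |s| sufficiently large. Then for every s̄ > 0 and every ε ∈ (0,1) there exists s ≥ s̄ + 1 such that sup_{k ≥ 1/s̄} g(s+k)/g(s) ≤ ε and sup_{0 < k < 1/s̄} g(s+k)/g(s) ≤ 2. -/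
open Filter Topology MeasureTheory

theorem stmt9 (g : ℝ → ℝ) (hgpos : ∀ s, 0 < g s)
    (hgbdd : ∃ B : ℝ, ∀ s, g s ≤ B)
    (hgdens : ∫ s, g s = 1)
    -- strictly subexponential:
    (hsub : ∃ p : ℝ, 1 < p ∧ ∃ M : ℝ, ∀ s : ℝ, M ≤ |s| → g s ≤ Real.exp (-(|s| ^ p))) :
    ∀ sb : ℝ, 0 < sb → ∀ ε : ℝ, 0 < ε → ε < 1 →
      ∃ s : ℝ, sb + 1 ≤ s ∧
        (∀ k : ℝ, 1 / sb ≤ k → g (s + k) / g s ≤ ε) ∧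
        (∀ k : ℝ, 0 < k → k < 1 / sb → g (s + k) / g s ≤ 2) := by
  obtain ⟨B, hB⟩ := hgbdd
  obtain ⟨p, hp, M, hM⟩ := hsub
  intro sb hsb ε hε hε1
  set δ : ℝ := 1 / sb with hδdef
  have hδ : 0 < δ := by positivity
  set G : ℝ → ℝ := fun s => sSup (g '' Set.Ici s) with hGdef
  have hbdd : ∀ s : ℝ, BddAbove (g '' Set.Ici s) := by
    intro s; exact ⟨B, by rintro _ ⟨t, _, rfl⟩; exact hB t⟩
  have hGge : ∀ s t : ℝ, s ≤ t → g t ≤ G s := fun s t hst =>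
    le_csSup (hbdd s) ⟨t, hst, rfl⟩
  have hGpos : ∀ s, 0 < G s := fun s => lt_of_lt_of_le (hgpos s) (hGge s s le_rfl)
  have hGanti : ∀ s t : ℝ, s ≤ t → G t ≤ G s := by
    intro s t hst
    refine csSup_le ⟨g t, t, le_refl t, rfl⟩ ?_
    rintro _ ⟨u, hu, rfl⟩
    exact hGge s u (hst.trans hu)
  have hGexp : ∀ s : ℝ, max M 0 ≤ s → G s ≤ Real.exp (-(s ^ p)) := by
    intro s hs
    have hs0 : (0:ℝ) ≤ s := le_trans (le_max_right _ _) hs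
    refine csSup_le ⟨g s, s, le_refl s, rfl⟩ ?_
    rintro _ ⟨t, (ht : s ≤ t), rfl⟩
    have ht0 : (0:ℝ) ≤ t := hs0.trans ht
    have h1 : g t ≤ Real.exp (-(|t| ^ p)) := by
      refine hM t ?_
      rw [abs_of_nonneg ht0]
      exact (((le_max_left _ _).trans hs)).trans ht
    refine h1.trans ?_
    rw [abs_of_nonneg ht0]
    exact Real.exp_le_exp.2 (neg_le_neg (Real.rpow_le_rpow hs0 ht (by linarith)))
  set s1 : ℝ := max (sb + 1) (max M 0) with hs1def
  have hs1pos : 0 < s1 := lt_of_lt_of_le (by linarith) (le_max_left _ _)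
  have key : ∃ s : ℝ, s1 ≤ s ∧ G (s + δ) ≤ (ε/2) * G s := by
    by_contra hcon
    push_neg at hcon
    have step : ∀ n : ℕ, (ε/2)^n * G s1 ≤ G (s1 + n * δ) := by
      intro n
      induction n with
      | zero => simp
      | succ n ih =>
        have h1 := hcon (s1 + n * δ) (le_add_of_nonneg_right (by positivity))
        push_cast
        rw [show s1 + ((n:ℝ)+1) * δ = (s1 + n*δ) + δ by ring]
        calc (ε/2)^(n+1) * G s1 = (ε/2) * ((ε/2)^n * G s1) := by ring
          _ ≤ (ε/2) * G (s1 + n*δ) := mul_le_mul_of_nonneg_left ih (by positivity)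
          _ ≤ G ((s1 + n*δ) + δ) := h1.le
    set c : ℝ := -Real.log (ε/2) with hcdef
    have hc : 0 < c := by
      have h := Real.log_neg (show (0:ℝ) < ε/2 by linarith) (show ε/2 < 1 by linarith)
      rw [hcdef]; linarith
    set L : ℝ := Real.log (G s1) with hLdef
    set C : ℝ := (c + |L| + 1)/δ + 1 with hCdef
    have hC : 0 < C := by
      have : 0 ≤ |L| := abs_nonneg _
      positivity
    set X : ℝ := max 1 (C ^ (1/(p-1))) with hXdef
    have hpne : p - 1 ≠ 0 := ne_of_gt (by linarith)
    have hpow : ∀ x : ℝ, X ≤ x → C * x ≤ x ^ p := by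
      intro x hx
      have hx1 : (1:ℝ) ≤ x := (le_max_left _ _).trans hx
      have hx0 : (0:ℝ) < x := lt_of_lt_of_le one_pos hx1
      have h2 : C ^ (1/(p-1)) ≤ x := (le_max_right _ _).trans hx
      have h3 : C ≤ x ^ (p-1) := by
        have hCeq : C = (C ^ (1/(p-1))) ^ (p-1) := by
          rw [← Real.rpow_mul hC.le, one_div_mul_cancel hpne, Real.rpow_one]
        rw [hCeq]
        exact Real.rpow_le_rpow (Real.rpow_nonneg hC.le _) h2 (by linarith)
      have hxp : x ^ p = x ^ (p-1) * x := by
        have h := Real.rpow_add hx0 (p-1) 1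
        rw [Real.rpow_one] at h
        rw [show p - 1 + 1 = p by ring] at h
        exact h
      rw [hxp]
      exact mul_le_mul_of_nonneg_right h3 hx0.le
    obtain ⟨n, hn⟩ := exists_nat_ge (max 1 (X/δ))
    have hn1 : (1:ℝ) ≤ (n:ℝ) := (le_max_left _ _).trans hn
    have hnX : X ≤ (n:ℝ) * δ := by
      have := (le_max_right _ _).trans hn
      rw [div_le_iff₀ hδ] at this
      linarith
    set x : ℝ := s1 + n * δ with hxdef
    have hxX : X ≤ x := by
      have : (0:ℝ) < s1 := hs1pos
      simp only [hxdef]; linarith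
    have hxM : max M 0 ≤ x := by
      have h1 : max M 0 ≤ s1 := le_max_right _ _
      have h2 : (0:ℝ) ≤ (n:ℝ) * δ := by positivity
      simp only [hxdef]; linarith
    have hGx : G x ≤ Real.exp (-(x ^ p)) := hGexp x hxM
    have hCx : C * x ≤ x ^ p := hpow x hxX
    have hbig : c * n - L + 1 ≤ x ^ p := by
      have h1 : C * ((n:ℝ)*δ) ≤ C * x := by
        have : (0:ℝ) < s1 := hs1pos
        have : (n:ℝ)*δ ≤ x := by simp only [hxdef]; linarith
        exact mul_le_mul_of_nonneg_left this hC.le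
      have h2 : C * ((n:ℝ)*δ) = (c + |L| + 1) * n + (n:ℝ)*δ := by
        have hδne : δ ≠ 0 := hδ.ne'
        rw [hCdef]
        calc ((c + |L| + 1)/δ + 1) * ((n:ℝ)*δ) = (c + |L| + 1) * n * (δ/δ) + (n:ℝ)*δ := by ring
          _ = (c + |L| + 1) * n + (n:ℝ)*δ := by rw [div_self hδne]; ring
      have h3 : -L ≤ |L| := neg_le_abs L
      have h4 : |L| ≤ |L| * n := le_mul_of_one_le_right (abs_nonneg _) hn1
      have h5 : (0:ℝ) < (n:ℝ)*δ := by positivity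
      nlinarith
    have hexp : Real.exp (-(x ^ p)) < (ε/2)^n * G s1 := by
      have h1 : -(x^p) < L + (n:ℝ) * Real.log (ε/2) := by
        have : (n:ℝ) * Real.log (ε/2) = -(c * n) := by rw [hcdef]; ring
        rw [this]; linarith
      have h2 : Real.exp (L + (n:ℝ) * Real.log (ε/2)) = G s1 * (ε/2)^n := by
        rw [Real.exp_add, Real.exp_log (hGpos s1), Real.exp_nat_mul,
          Real.exp_log (by linarith : (0:ℝ) < ε/2)]
      calc Real.exp (-(x^p)) < Real.exp (L + (n:ℝ) * Real.log (ε/2)) := Real.exp_lt_exp.2 h1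
        _ = (ε/2)^n * G s1 := by rw [h2]; ring
    exact absurd ((step n).trans hGx) (not_le.2 hexp)
  obtain ⟨s, hs1s, hsε⟩ := key
  obtain ⟨a, ⟨t, (hts : s ≤ t), rfl⟩, hta⟩ :=
    exists_lt_of_lt_csSup (⟨g s, s, le_refl s, rfl⟩ : (g '' Set.Ici s).Nonempty)
      (show G s / 2 < G s by linarith [hGpos s])
  refine ⟨t, ?_, ?_, ?_⟩
  · exact ((le_max_left _ _).trans hs1s).trans hts
  · intro k hk
    have h1 : g (t + k) ≤ G (s + δ) := hGge _ _ (by simp only [hδdef] at hk ⊢; linarith)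
    have h2 : (ε/2) * G s ≤ ε * g t := by nlinarith [hGpos s]
    rw [div_le_iff₀ (hgpos t)]
    linarith
  · intro k hk _
    have h1 : g (t + k) ≤ G s := hGge _ _ (by linarith)
    rw [div_le_iff₀ (hgpos t)]
    linarith
end

section
/- Let g : ℝ → ℝ₊ be a bounded, strictly positive, strictly subexponential density, and define the location-shift signal structure f(s|ω) = g(s − ω) for states ω ∈ Ω ⊆ ℤ. Then f satisfies DUB: for every ω there exist C > 0 and sequences (s̄_i) → ∞ and (s̲_i) → −∞ such that for all ω' < ω, f(s̄_i|ω')/f(s̄_i|ω) → 0 and < C for all i, and for all ω' > ω, f(s̲_i|ω')/f(s̲_i|ω) → 0 and < C for all i. -/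
open Filter Topology

lemma stmt10_aux (g : ℝ → ℝ) (hgpos : ∀ s, 0 < g s)
    (hgbdd : ∃ B : ℝ, ∀ s, g s ≤ B)
    (hsub : ∃ p : ℝ, 1 < p ∧ ∃ M : ℝ, ∀ s : ℝ, M ≤ |s| → g s ≤ Real.exp (-(|s| ^ p))) :
    ∃ t : ℕ → ℝ, Tendsto t atTop atTop ∧ ∀ d : ℝ, 1 ≤ d →
      Tendsto (fun i => g (t i + d) / g (t i)) atTop (𝓝 0) ∧
      ∀ i, g (t i + d) / g (t i) < 3 := by
  obtain ⟨B, hB⟩ := hgbdd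
  obtain ⟨p, hp, M, hM⟩ := hsub
  set q : ℝ := (1 + p) / 2 with hq
  have hq1 : 1 < q := by rw [hq]; linarith
  have hqp : q < p := by rw [hq]; linarith
  have hq0 : 0 < q := by linarith
  set φ : ℝ → ℝ := fun u => g u * Real.exp (u ^ q) with hφ
  have hφpos : ∀ u, 0 < φ u := fun u => mul_pos (hgpos u) (Real.exp_pos _)
  -- φ is bounded above on [0, ∞)
  set K : ℝ := max M 1 with hK
  set Bφ : ℝ := max 1 (B * Real.exp (K ^ q)) with hBφ
  have hφbdd : ∀ u : ℝ, 0 ≤ u → φ u ≤ Bφ := by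
    intro u hu
    rcases le_or_gt K u with h | h
    · have hu1 : (1 : ℝ) ≤ u := le_trans (le_max_right _ _) h
      have hgu : g u ≤ Real.exp (-(u ^ p)) := by
        have := hM u (by rw [abs_of_nonneg hu]; exact le_trans (le_max_left _ _) h)
        rwa [abs_of_nonneg hu] at this
      have : φ u ≤ Real.exp (-(u ^ p)) * Real.exp (u ^ q) :=
        mul_le_mul_of_nonneg_right hgu (Real.exp_pos _).le
      rw [← Real.exp_add] at this
      have hle : u ^ q ≤ u ^ p := Real.rpow_le_rpow_of_exponent_le hu1 hqp.le
      calc φ u ≤ Real.exp (-(u ^ p) + u ^ q) := this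
        _ ≤ Real.exp 0 := Real.exp_le_exp.2 (by linarith)
        _ = 1 := Real.exp_zero
        _ ≤ Bφ := le_max_left _ _
    · have : φ u ≤ B * Real.exp (K ^ q) := by
        apply mul_le_mul (hB u) _ (Real.exp_pos _).le
          (le_trans (hgpos u).le (hB u))
        exact Real.exp_le_exp.2 (Real.rpow_le_rpow hu h.le hq0.le)
      exact le_trans this (le_max_right _ _)
  -- choice of near-maximizers
  have key : ∀ i : ℕ, ∃ a : ℝ, (i : ℝ) ≤ a ∧ ∀ u, (i : ℝ) ≤ u → φ u < 2 * φ a := by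
    intro i
    have hne : (φ '' Set.Ici (i : ℝ)).Nonempty := ⟨φ i, ⟨i, Set.mem_Ici.2 le_rfl, rfl⟩⟩
    have hbdd : BddAbove (φ '' Set.Ici (i : ℝ)) := by
      refine ⟨Bφ, ?_⟩
      rintro x ⟨u, hu, rfl⟩
      exact hφbdd u (le_trans (Nat.cast_nonneg i) hu)
    set S := sSup (φ '' Set.Ici (i : ℝ)) with hS
    have hSpos : 0 < S :=
      lt_of_lt_of_le (hφpos i) (le_csSup hbdd ⟨i, Set.mem_Ici.2 le_rfl, rfl⟩)
    obtain ⟨x, ⟨a, ha, rfl⟩, hx⟩ := exists_lt_of_lt_csSup hne (by linarith : S / 2 < S)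
    refine ⟨a, ha, fun u hu => ?_⟩
    have := le_csSup hbdd ⟨u, hu, rfl⟩
    linarith
  choose t ht1 ht2 using key
  have htop : Tendsto t atTop atTop :=
    tendsto_atTop_mono ht1 tendsto_natCast_atTop_atTop
  have ht0 : ∀ i, 0 ≤ t i := fun i => le_trans (Nat.cast_nonneg i) (ht1 i)
  refine ⟨t, htop, fun d hd => ?_⟩
  have hratio : ∀ i, g (t i + d) / g (t i) < 2 * Real.exp ((t i) ^ q - (t i + d) ^ q) := by
    intro i
    have hφlt : φ (t i + d) < 2 * φ (t i) :=
      ht2 i (t i + d) (le_trans (ht1 i) (by linarith))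
    have h1 : g (t i + d) * Real.exp ((t i + d) ^ q) <
        2 * (g (t i) * Real.exp ((t i) ^ q)) := hφlt
    rw [div_lt_iff₀ (hgpos (t i))]
    have h2 : g (t i + d) <
        2 * (g (t i) * Real.exp ((t i) ^ q)) / Real.exp ((t i + d) ^ q) := by
      rw [lt_div_iff₀ (Real.exp_pos _)]; exact h1
    calc g (t i + d) < 2 * (g (t i) * Real.exp ((t i) ^ q)) / Real.exp ((t i + d) ^ q) := h2
      _ = 2 * Real.exp ((t i) ^ q - (t i + d) ^ q) * g (t i) := by
          rw [Real.exp_sub]; ring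
  have hexple : ∀ i, Real.exp ((t i) ^ q - (t i + d) ^ q) ≤ 1 := by
    intro i
    rw [Real.exp_le_one_iff, sub_nonpos]
    exact Real.rpow_le_rpow (ht0 i) (by linarith) hq0.le
  constructor
  · -- tendsto 0
    have hbig : Tendsto (fun i => (t i + d) ^ q - (t i) ^ q) atTop atTop := by
      have hmain : Tendsto (fun i => q * (t i) ^ (q - 1)) atTop atTop := by
        apply Tendsto.const_mul_atTop hq0
        exact (tendsto_rpow_atTop (by linarith)).comp htop
      apply tendsto_atTop_mono' _ _ hmain
      filter_upwards [htop.eventually_ge_atTop 1] with i hi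
      -- (a+d)^q ≥ a^q + q * a^(q-1) for a ≥ 1, d ≥ 1
      set a := t i with ha
      have ha0 : 0 < a := lt_of_lt_of_le one_pos hi
      have hbern : 1 + q * (d / a) ≤ (1 + d / a) ^ q :=
        one_add_mul_self_le_rpow_one_add (by have := div_nonneg (by linarith : (0:ℝ) ≤ d) ha0.le; linarith) hq1.le
      have heq : (a + d) ^ q = a ^ q * (1 + d / a) ^ q := by
        rw [← Real.mul_rpow ha0.le (by positivity)]
        congr 1
        field_simp
      have h3 : a ^ q * (1 + q * (d / a)) ≤ (a + d) ^ q := by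
        rw [heq]
        exact mul_le_mul_of_nonneg_left hbern (Real.rpow_nonneg ha0.le _)
      have h4 : a ^ q * (q * (d / a)) = q * d * a ^ (q - 1) := by
        rw [Real.rpow_sub ha0, Real.rpow_one]
        field_simp
      have h5 : q * a ^ (q - 1) ≤ q * d * a ^ (q - 1) := by
        apply mul_le_mul_of_nonneg_right _ (Real.rpow_nonneg ha0.le _)
        nlinarith
      nlinarith [mul_add (a ^ q) 1 (q * (d / a))]
    have hexp0 : Tendsto (fun i => 2 * Real.exp ((t i) ^ q - (t i + d) ^ q)) atTop (𝓝 0) := by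
      have : Tendsto (fun i => (t i) ^ q - (t i + d) ^ q) atTop atBot := by
        have := tendsto_neg_atTop_atBot.comp hbig
        refine this.congr fun i => ?_
        simp [Function.comp, neg_sub]
      have := Real.tendsto_exp_atBot.comp this
      simpa using this.const_mul 2
    apply tendsto_of_tendsto_of_tendsto_of_le_of_le' tendsto_const_nhds hexp0
    · filter_upwards with i
      exact div_nonneg (hgpos _).le (hgpos _).le
    · filter_upwards with i
      exact (hratio i).le
  · intro i
    calc g (t i + d) / g (t i) < 2 * Real.exp ((t i) ^ q - (t i + d) ^ q) := hratio i
      _ ≤ 2 * 1 := by nlinarith [hexple i, Real.exp_pos ((t i) ^ q - (t i + d) ^ q)]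
      _ < 3 := by norm_num

theorem stmt10 (g : ℝ → ℝ) (hgpos : ∀ s, 0 < g s)
    (hgbdd : ∃ B : ℝ, ∀ s, g s ≤ B)
    -- strictly subexponential:
    (hsub : ∃ p : ℝ, 1 < p ∧ ∃ M : ℝ, ∀ s : ℝ, M ≤ |s| → g s ≤ Real.exp (-(|s| ^ p)))
    -- location-shift signal structure:
    (f : ℝ → ℤ → ℝ) (hf : ∀ s ω, f s ω = g (s - ω)) :
    -- DUB:
    ∀ ω : ℤ, ∃ C > (0 : ℝ), ∃ sbar sund : ℕ → ℝ,
      Tendsto sbar atTop atTop ∧ Tendsto sund atTop atBot ∧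
      (∀ ω' < ω, Tendsto (fun i => f (sbar i) ω' / f (sbar i) ω) atTop (𝓝 0) ∧
        ∀ i, f (sbar i) ω' / f (sbar i) ω < C) ∧
      (∀ ω' > ω, Tendsto (fun i => f (sund i) ω' / f (sund i) ω) atTop (𝓝 0) ∧
        ∀ i, f (sund i) ω' / f (sund i) ω < C) := by
  intro ω
  obtain ⟨t, htop, hprop⟩ := stmt10_aux g hgpos hgbdd hsub
  have hg' : ∀ s, 0 < g (-s) := fun s => hgpos (-s)
  obtain ⟨t', htop', hprop'⟩ := stmt10_aux (fun s => g (-s)) hg'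
    (hgbdd.imp fun B hB s => hB (-s))
    (by
      obtain ⟨p, hp, M, hM⟩ := hsub
      exact ⟨p, hp, M, fun s hs => by
        simpa [abs_neg] using hM (-s) (by simpa [abs_neg] using hs)⟩)
  refine ⟨3, by norm_num, fun i => (ω : ℝ) + t i, fun i => (ω : ℝ) - t' i,
    tendsto_atTop_add_const_left _ _ htop, ?_, ?_, ?_⟩
  · have : Tendsto (fun i => -(t' i)) atTop atBot := tendsto_neg_atTop_atBot.comp htop'
    simpa [sub_eq_add_neg] using tendsto_atBot_add_const_left atTop ((ω : ℝ)) this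
  · intro ω' hω'
    have h1 : ω' + 1 ≤ ω := hω'
    have hd : (1 : ℝ) ≤ (ω : ℝ) - (ω' : ℝ) := by
      have : ((ω' : ℝ)) + 1 ≤ (ω : ℝ) := by exact_mod_cast h1
      linarith
    obtain ⟨htend, hbd⟩ := hprop ((ω : ℝ) - (ω' : ℝ)) hd
    have hfeq : ∀ i, f ((ω : ℝ) + t i) ω' / f ((ω : ℝ) + t i) ω =
        g (t i + ((ω : ℝ) - (ω' : ℝ))) / g (t i) := by
      intro i
      rw [hf, hf, show (ω : ℝ) + t i - ω' = t i + ((ω : ℝ) - (ω' : ℝ)) by ring,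
        show (ω : ℝ) + t i - ω = t i by ring]
    exact ⟨htend.congr fun i => (hfeq i).symm, fun i => by rw [hfeq i]; exact hbd i⟩
  · intro ω' hω'
    have h1 : ω + 1 ≤ ω' := hω'
    have hd : (1 : ℝ) ≤ (ω' : ℝ) - (ω : ℝ) := by
      have : ((ω : ℝ)) + 1 ≤ (ω' : ℝ) := by exact_mod_cast h1
      linarith
    obtain ⟨htend, hbd⟩ := hprop' ((ω' : ℝ) - (ω : ℝ)) hd
    have hfeq : ∀ i, f ((ω : ℝ) - t' i) ω' / f ((ω : ℝ) - t' i) ω =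
        g (-(t' i + ((ω' : ℝ) - (ω : ℝ)))) / g (-(t' i)) := by
      intro i
      rw [hf, hf, show (ω : ℝ) - t' i - ω' = -(t' i + ((ω' : ℝ) - (ω : ℝ))) by ring,
        show (ω : ℝ) - t' i - ω = -(t' i) by ring]
    exact ⟨htend.congr fun i => (hfeq i).symm, fun i => by rw [hfeq i]; exact hbd i⟩
end

section
/- Let g : ℝ → ℝ₊ be a density that is superexponential in the tail: there is p < 1 such that g(s) ≥ exp(−s^p) for all s sufficiently large. Then for any z > 0, if lim_{s→∞} g(s+z)/g(s) exists, it equals 1. -/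
open Filter Topology

/-- For `a < 0` and `0 < p < 1`, `a * x + b * x ^ p → -∞`. -/
lemma aux_atBot (p : ℝ) (hp0 : 0 < p) (hp1 : p < 1) (a b : ℝ) (ha : a < 0) :
    Tendsto (fun x : ℝ => a * x + b * x ^ p) atTop atBot := by
  have h1 : Tendsto (fun x : ℝ => a + b * x ^ (p - 1)) atTop (𝓝 a) := by
    have h0 : Tendsto (fun x : ℝ => x ^ (-(1 - p))) atTop (𝓝 0) :=
      tendsto_rpow_neg_atTop (by linarith)
    have : Tendsto (fun x : ℝ => a + b * x ^ (-(1 - p))) atTop (𝓝 (a + b * 0)) :=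
      tendsto_const_nhds.add (h0.const_mul b)
    simpa [neg_sub] using this
  have h2 : ∀ᶠ x : ℝ in atTop, a + b * x ^ (p - 1) ≤ a / 2 :=
    (h1.eventually_lt_const (by linarith : a < a / 2)).mono fun x hx => hx.le
  have h3 : Tendsto (fun x : ℝ => x * (a / 2)) atTop atBot :=
    tendsto_id.atTop_mul_const_of_neg (by linarith)
  refine tendsto_atBot_mono' atTop ?_ h3
  filter_upwards [h2, eventually_gt_atTop (0 : ℝ)] with x hx hx0
  have hxp : x ^ p = x ^ (p - 1) * x := by
    rw [Real.rpow_sub hx0, Real.rpow_one, div_mul_cancel₀ _ (ne_of_gt hx0)]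
  have : a * x + b * x ^ p = x * (a + b * x ^ (p - 1)) := by rw [hxp]; ring
  rw [this]
  exact mul_le_mul_of_nonneg_left hx hx0.le

theorem stmt14 (g : ℝ → ℝ) (hgpos : ∀ s, 0 < g s) (hgbdd : ∃ B : ℝ, ∀ s, g s ≤ B)
    (p : ℝ) (hp0 : 0 < p) (hp1 : p < 1)
    (hsup : ∃ M : ℝ, ∀ s : ℝ, M ≤ s → Real.exp (-(s ^ p)) ≤ g s)
    (z : ℝ) (hz : 0 < z) :
    ∀ L : ℝ, Tendsto (fun s : ℝ => g (s + z) / g s) atTop (𝓝 L) → L = 1 := by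
  obtain ⟨B, hB⟩ := hgbdd
  obtain ⟨M, hM⟩ := hsup
  intro L hL
  by_contra hne
  have hL0 : 0 ≤ L := by
    refine ge_of_tendsto hL ?_
    filter_upwards with s
    exact div_nonneg (hgpos _).le (hgpos _).le
  rcases lt_or_gt_of_ne hne with h1 | h1
  · -- L < 1 : geometric decay contradicts the superexponential lower bound
    set c : ℝ := (1 + L) / 2 with hc
    have hc0 : 0 < c := by simp only [hc]; linarith
    have hc1 : c < 1 := by simp only [hc]; linarith
    have hLc : L < c := by simp only [hc]; linarith
    obtain ⟨S₁, hS₁⟩ := eventually_atTop.mp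
      ((hL.eventually_lt_const hLc).mono fun s hs => hs.le)
    set S : ℝ := max S₁ (max M 1) with hSdef
    have hSS₁ : S₁ ≤ S := le_max_left _ _
    have hSM : M ≤ S := le_trans (le_max_left _ _) (le_max_right _ _)
    have hS1 : (1 : ℝ) ≤ S := le_trans (le_max_right _ _) (le_max_right _ _)
    have key : ∀ n : ℕ, g (S + n * z) ≤ c ^ n * g S := by
      intro n
      induction n with
      | zero => simp
      | succ n ih =>
        have hs : S₁ ≤ S + n * z := by
          have : (0 : ℝ) ≤ n * z := by positivity
          linarith
        have hr : g (S + n * z + z) / g (S + n * z) ≤ c := hS₁ _ hs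
        have hpos := hgpos (S + n * z)
        have : g (S + n * z + z) ≤ c * g (S + n * z) := by
          rw [div_le_iff₀ hpos] at hr; linarith
        calc g (S + (n + 1 : ℕ) * z) = g (S + n * z + z) := by push_cast; ring_nf
          _ ≤ c * g (S + n * z) := this
          _ ≤ c * (c ^ n * g S) := by
              exact mul_le_mul_of_nonneg_left ih hc0.le
          _ = c ^ (n + 1) * g S := by ring
    have lower : ∀ n : ℕ, Real.exp (-((S + n * z) ^ p)) ≤ g (S + n * z) := by
      intro n
      refine hM _ ?_
      have : (0 : ℝ) ≤ n * z := by positivity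
      linarith
    -- combine: 1 ≤ g S * exp (log c * n + (S + n z)^p)
    have comb : ∀ n : ℕ,
        (1 : ℝ) ≤ g S * Real.exp (Real.log c * n + (S + n * z) ^ p) := by
      intro n
      have h := (lower n).trans (key n)
      have hE : (0 : ℝ) < Real.exp ((S + n * z) ^ p) := Real.exp_pos _
      have := mul_le_mul_of_nonneg_right h hE.le
      rw [← Real.exp_add] at this
      simp only [neg_add_cancel, Real.exp_zero] at this
      calc (1 : ℝ) ≤ c ^ n * g S * Real.exp ((S + n * z) ^ p) := this
        _ = g S * Real.exp (Real.log c * n + (S + n * z) ^ p) := by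
            rw [Real.exp_add, mul_comm (Real.log c) (n : ℝ),
              Real.exp_nat_mul, Real.exp_log hc0]
            ring
    -- but the RHS tends to 0
    have hlogc : Real.log c < 0 := Real.log_neg hc0 hc1
    have hbase : Tendsto (fun x : ℝ => Real.log c * x + (S + z) ^ p * x ^ p)
        atTop atBot := aux_atBot p hp0 hp1 _ _ hlogc
    have hbound : Tendsto (fun x : ℝ => Real.log c * x + (S + x * z) ^ p) atTop atBot := by
      refine tendsto_atBot_mono' atTop ?_ hbase
      filter_upwards [eventually_ge_atTop (1 : ℝ)] with x hx
      have hx0 : (0 : ℝ) ≤ x := by linarith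
      have h1 : S + x * z ≤ (S + z) * x := by
        have : S * 1 ≤ S * x := by nlinarith
        nlinarith
      have h2 : (S + x * z) ^ p ≤ ((S + z) * x) ^ p :=
        Real.rpow_le_rpow (by nlinarith) h1 hp0.le
      have h3 : ((S + z) * x) ^ p = (S + z) ^ p * x ^ p :=
        Real.mul_rpow (by nlinarith) hx0
      linarith [h2, h3.le]
    have hnat : Tendsto (fun n : ℕ => Real.log c * n + (S + n * z) ^ p) atTop atBot :=
      hbound.comp tendsto_natCast_atTop_atTop
    have hzero : Tendsto (fun n : ℕ =>
        g S * Real.exp (Real.log c * n + (S + n * z) ^ p)) atTop (𝓝 (g S * 0)) :=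
      (Real.tendsto_exp_atBot.comp hnat).const_mul (g S)
    rw [mul_zero] at hzero
    have := (hzero.eventually_lt_const (by norm_num : (0:ℝ) < 1)).exists
    obtain ⟨n, hn⟩ := this
    exact absurd (comb n) (not_le.mpr hn)
  · -- L > 1 : geometric growth contradicts boundedness
    set c : ℝ := (1 + L) / 2 with hc
    have hc1 : 1 < c := by simp only [hc]; linarith
    have hcL : c < L := by simp only [hc]; linarith
    obtain ⟨S, hS⟩ := eventually_atTop.mp
      ((hL.eventually_const_lt hcL).mono fun s hs => hs.le)
    have key : ∀ n : ℕ, c ^ n * g S ≤ g (S + n * z) := by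
      intro n
      induction n with
      | zero => simp
      | succ n ih =>
        have hs : S ≤ S + n * z := by
          have : (0 : ℝ) ≤ n * z := by positivity
          linarith
        have hr : c ≤ g (S + n * z + z) / g (S + n * z) := hS _ hs
        have hpos := hgpos (S + n * z)
        have h2 : c * g (S + n * z) ≤ g (S + n * z + z) := by
          rw [le_div_iff₀ hpos] at hr; linarith
        calc c ^ (n + 1) * g S = c * (c ^ n * g S) := by ring
          _ ≤ c * g (S + n * z) :=
              mul_le_mul_of_nonneg_left ih (by linarith)
          _ ≤ g (S + n * z + z) := h2
          _ = g (S + (n + 1 : ℕ) * z) := by push_cast; ring_nf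
    have hinf : Tendsto (fun n : ℕ => c ^ n * g S) atTop atTop :=
      (tendsto_pow_atTop_atTop_of_one_lt hc1).atTop_mul_const (hgpos S)
    obtain ⟨n, hn⟩ := (hinf.eventually_gt_atTop B).exists
    exact absurd ((key n).trans (hB _)) (not_le.mpr hn)
end

section
/- Suppose preferences u satisfy SCD and the signal structure satisfies directional distinguishability, with sup_{a,a',ω} |u(a,ω) − u(a',ω)| < ∞. Then every stationary belief has adequate knowledge: if μ is a belief such that for some a maximizing expected utility under μ, a also maximizes expected utility under the posterior μ_s for every signal s, then there exists an action that is optimal in every state in the support of μ. -/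
open Filter Topology

lemma aux_pos (μf h : ℤ → ℝ) (D : ℝ) (hDh : ∀ ω, |h ω| ≤ D)
    (hμf : ∀ ω, 0 ≤ μf ω) (hsum : Summable μf) (P : Set ℤ) (ω₀ : ℤ) (hω₀P : ω₀ ∉ P)
    (hhP : ∀ x, x ∉ P → 0 ≤ h x) (hh0 : 0 < h ω₀) (hM : 0 < μf ω₀)
    (hratio : (∑' x : P, μf x) / μf ω₀ < h ω₀ / (D + 1)) :
    0 < ∑' ω, μf ω * h ω := by
  have hD0 : 0 < D := lt_of_lt_of_le hh0 ((le_abs_self _).trans (hDh ω₀))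
  have hD1 : (0:ℝ) < D + 1 := by linarith
  have hg : Summable (fun ω => μf ω * h ω) := by
    apply Summable.of_norm_bounded (hsum.mul_right D)
    intro ω
    rw [Real.norm_eq_abs, abs_mul, abs_of_nonneg (hμf ω)]
    exact mul_le_mul_of_nonneg_left (hDh ω) (hμf ω)
  set SP := ∑' x : P, μf x with hSPdef
  have hSP0 : 0 ≤ SP := tsum_nonneg (fun x => hμf x)
  have hSPlt : SP < h ω₀ / (D + 1) * μf ω₀ := (div_lt_iff₀ hM).mp hratio
  have hDSP : D * SP < h ω₀ * μf ω₀ := by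
    have h1 : D * SP ≤ (D + 1) * SP := by nlinarith
    have h2 : (D + 1) * SP < (D + 1) * (h ω₀ / (D + 1) * μf ω₀) := by
      nlinarith
    have h3 : (D + 1) * (h ω₀ / (D + 1) * μf ω₀) = h ω₀ * μf ω₀ := by
      field_simp
    linarith
  have hsplit : (∑' x : P, μf x * h x) + (∑' x : (Pᶜ : Set ℤ), μf x * h x)
      = ∑' ω, μf ω * h ω :=
    Summable.tsum_add_tsum_compl (hg.subtype P) (hg.subtype Pᶜ)
  have h1 : -(D * SP) ≤ ∑' x : P, μf x * h x := by
    have hle : ∀ x : P, -(D * μf (x:ℤ)) ≤ μf (x:ℤ) * h (x:ℤ) := by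
      intro x
      have := (abs_le.mp (hDh (x:ℤ))).1
      nlinarith [hμf (x:ℤ)]
    calc -(D * SP) = ∑' x : P, -(D * μf (x:ℤ)) := by
          rw [tsum_neg, tsum_mul_left]
      _ ≤ ∑' x : P, μf (x:ℤ) * h (x:ℤ) :=
          Summable.tsum_le_tsum hle (((hsum.subtype P).mul_left D).neg) (hg.subtype P)
  have h2 : μf ω₀ * h ω₀ ≤ ∑' x : (Pᶜ : Set ℤ), μf x * h x := by
    exact Summable.le_tsum (hg.subtype Pᶜ) (⟨ω₀, hω₀P⟩ : (Pᶜ : Set ℤ))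
      (fun j _ => mul_nonneg (hμf (j:ℤ)) (hhP (j:ℤ) j.2))
  nlinarith [hsplit]

theorem stmt18 {A S : Type*} [Countable A]
    (u : A → ℤ → ℝ)
    -- uniformly bounded utility differences:
    (D : ℝ) (hD : ∀ (a a' : A) (ω : ℤ), |u a ω - u a' ω| ≤ D)
    -- SCD:
    (hscd : ∀ a a' : A, SingleCrossingFn (fun ω => u a ω - u a' ω))
    -- signal structure:
    (f : S → ℤ → ℝ) (hpos : ∀ s ω, 0 < f s ω)
    -- directional distinguishability:
    (hdd : ∀ (ω : ℤ) (ν : ℤ → ℝ), (∀ x, 0 ≤ ν x) → Summable ν → (∑' x, ν x) = 1 →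
      0 < ν ω → (∀ s, Summable (fun x => ν x * f s x)) → ∀ ε > (0 : ℝ),
      (∃ s : S, (∑' x : {x : ℤ // x < ω}, ν x * f s x) / (ν ω * f s ω) < ε) ∧
      (∃ s : S, (∑' x : {x : ℤ // ω < x}, ν x * f s x) / (ν ω * f s ω) < ε))
    -- a belief μ:
    (μ : ℤ → ℝ) (hμ0 : ∀ x, 0 ≤ μ x) (hμs : Summable μ) (hμ1 : ∑' x, μ x = 1)
    (hfsum : ∀ s : S, Summable (fun x => μ x * f s x))
    -- μ is stationary: some action optimal at μ remains optimal after every signal,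
    -- where posteriors are given by Bayes rule:
    (hstat : ∃ a : A,
      (∀ b : A, (∑' ω, μ ω * (u b ω - u a ω)) ≤ 0) ∧
      (∀ s : S, ∀ b : A,
        (∑' ω, (μ ω * f s ω / ∑' ω', μ ω' * f s ω') * (u b ω - u a ω)) ≤ 0)) :
    -- adequate knowledge: some action is optimal at every state in the support of μ:
    ∃ a : A, ∀ ω : ℤ, 0 < μ ω → ∀ b : A, u b ω ≤ u a ω := by
  obtain ⟨a, _hopt, hpost⟩ := hstat
  refine ⟨a, fun ω₀ hμω₀ b => ?_⟩
  by_contra hb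
  push_neg at hb
  have hh0 : 0 < u b ω₀ - u a ω₀ := sub_pos.mpr hb
  have hD0 : 0 < D := lt_of_lt_of_le hh0 ((le_abs_self _).trans (hD b a ω₀))
  have hε : 0 < (u b ω₀ - u a ω₀) / (D + 1) := by
    apply div_pos hh0; linarith
  obtain ⟨⟨s₁, hs₁⟩, ⟨s₂, hs₂⟩⟩ :=
    hdd ω₀ μ hμ0 hμs hμ1 hμω₀ hfsum _ hε
  -- generic contradiction given a signal s and a bad set P
  have key : ∀ (s : S) (P : Set ℤ), ω₀ ∉ P → (∀ x, x ∉ P → 0 ≤ u b x - u a x) →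
      (∑' x : P, μ (x:ℤ) * f s (x:ℤ)) / (μ ω₀ * f s ω₀) < (u b ω₀ - u a ω₀) / (D + 1) →
      False := by
    intro s P hω₀P hhP hratio
    set Z := ∑' ω', μ ω' * f s ω' with hZdef
    have hμf0 : ∀ ω, 0 ≤ μ ω * f s ω := fun ω => mul_nonneg (hμ0 ω) (hpos s ω).le
    have hZpos : 0 < Z := lt_of_lt_of_le (mul_pos hμω₀ (hpos s ω₀))
      (Summable.le_tsum (hfsum s) ω₀ (fun j _ => hμf0 j))
    have hkey : 0 < ∑' ω, (μ ω * f s ω) * (u b ω - u a ω) :=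
      aux_pos (fun ω => μ ω * f s ω) (fun ω => u b ω - u a ω) D (fun ω => hD b a ω)
        hμf0 (hfsum s) P ω₀ hω₀P hhP hh0 (mul_pos hμω₀ (hpos s ω₀)) hratio
    have hpost' := hpost s b
    have heq : (∑' ω, (μ ω * f s ω / Z) * (u b ω - u a ω))
        = (∑' ω, (μ ω * f s ω) * (u b ω - u a ω)) / Z := by
      rw [← tsum_div_const]
      exact tsum_congr (fun ω => by ring)
    rw [heq] at hpost'
    have : (∑' ω, (μ ω * f s ω) * (u b ω - u a ω)) ≤ 0 := by
      have := mul_le_mul_of_nonneg_right hpost' hZpos.le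
      rwa [div_mul_cancel₀ _ hZpos.ne', zero_mul] at this
    linarith
  rcases hscd b a with hup | hdown
  · -- upward single crossing: use s₁ and P = {x | x < ω₀}
    refine key s₁ {x | x < ω₀} (by simp) (fun x hx => ?_) hs₁
    simp only [Set.mem_setOf_eq, not_lt] at hx
    rcases eq_or_lt_of_le hx with rfl | hlt
    · exact hh0.le
    · exact hup ω₀ x hlt hh0
  · -- downward single crossing: use s₂ and P = {x | ω₀ < x}
    refine key s₂ {x | ω₀ < x} (by simp) (fun x hx => ?_) hs₂
    simp only [Set.mem_setOf_eq, not_lt] at hx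
    rcases eq_or_lt_of_le hx with rfl | hlt
    · exact hh0.le
    · by_contra hneg
      push_neg at hneg
      exact absurd (hdown x ω₀ hlt hneg) (not_le.mpr hh0)
end

section
/- Suppose u fails SCD, witnessed by actions a', a'' and states ω1 < ω2 < ω3 with u(a',ω1) > u(a'',ω1), u(a',ω3) > u(a'',ω3), and u(a',ω2) < u(a'',ω2), and suppose the signal structure f satisfies MLRP. Then there exists ε > 0 such that the belief μ with μ(ω2) = ε and μ(ω1) = μ(ω3) = (1−ε)/2 satisfies: for every signal s, the posterior expected utility difference E_{μ_s}[u(a',ω) − u(a'',ω)] > 0. In particular, μ is stationary for the choice set {a', a''} but does not have adequate knowledge. -/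
open Filter Topology

theorem stmt19 {A S : Type*} [LinearOrder S]
    (f : S → ℤ → ℝ) (hpos : ∀ s ω, 0 < f s ω)
    -- MLRP:
    (hmlrp : ∀ ω ω' : ℤ, ω < ω' → ∀ s s' : S, s < s' →
      f s ω' / f s ω ≤ f s' ω' / f s' ω)
    (u : A → ℤ → ℝ) (a' a'' : A)
    (ω1 ω2 ω3 : ℤ) (h12 : ω1 < ω2) (h23 : ω2 < ω3)
    -- failure of SCD witnessed by a', a'' at ω1 < ω2 < ω3:
    (h1 : u a' ω1 > u a'' ω1) (h3 : u a' ω3 > u a'' ω3) (h2 : u a' ω2 < u a'' ω2) :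
    ∃ ε : ℝ, 0 < ε ∧ ε < 1 ∧
      -- with prior μ(ω2) = ε, μ(ω1) = μ(ω3) = (1-ε)/2, after every signal the
      -- posterior expected utility difference between a' and a'' is positive:
      (∀ s : S,
        ((1 - ε) / 2 * f s ω1 * (u a' ω1 - u a'' ω1) +
         ε * f s ω2 * (u a' ω2 - u a'' ω2) +
         (1 - ε) / 2 * f s ω3 * (u a' ω3 - u a'' ω3)) /
        ((1 - ε) / 2 * f s ω1 + ε * f s ω2 + (1 - ε) / 2 * f s ω3) > 0) ∧
      -- μ does not have adequate knowledge for the choice set {a', a''}: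
      ¬ ∃ a : A, (a = a' ∨ a = a'') ∧
        (∀ b : A, (b = a' ∨ b = a'') →
          u b ω1 ≤ u a ω1 ∧ u b ω2 ≤ u a ω2 ∧ u b ω3 ≤ u a ω3) := by
  have noAdeq : ¬ ∃ a : A, (a = a' ∨ a = a'') ∧
      (∀ b : A, (b = a' ∨ b = a'') →
        u b ω1 ≤ u a ω1 ∧ u b ω2 ≤ u a ω2 ∧ u b ω3 ≤ u a ω3) := by
    rintro ⟨a, (rfl | rfl), hb⟩
    · exact absurd (hb a'' (Or.inr rfl)).2.1 (not_le.mpr h2)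
    · exact absurd (hb a' (Or.inl rfl)).1 (not_le.mpr h1)
  by_cases hS : Nonempty S
  · obtain ⟨s0⟩ := hS
    set C := max (f s0 ω2 / f s0 ω1) (f s0 ω2 / f s0 ω3) with hCdef
    have hCpos : 0 < C := lt_max_of_lt_left (div_pos (hpos s0 ω2) (hpos s0 ω1))
    have key : ∀ s, f s ω2 ≤ C * (f s ω1 + f s ω3) := by
      intro s
      rcases le_or_gt s s0 with hs | hs
      · have hdiv : f s ω2 / f s ω1 ≤ f s0 ω2 / f s0 ω1 := by
          rcases eq_or_lt_of_le hs with rfl | hs'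
          · exact le_refl _
          · exact hmlrp ω1 ω2 h12 s s0 hs'
        have h12' : f s ω2 ≤ C * f s ω1 := by
          exact (div_le_iff₀ (hpos s ω1)).mp (hdiv.trans (le_max_left (f s0 ω2 / f s0 ω1) (f s0 ω2 / f s0 ω3)))
        nlinarith [hpos s ω3]
      · have hdiv : f s0 ω3 / f s0 ω2 ≤ f s ω3 / f s ω2 := hmlrp ω2 ω3 h23 s0 s hs
        have hcross : f s0 ω3 * f s ω2 ≤ f s ω3 * f s0 ω2 :=
          (div_le_div_iff₀ (hpos s0 ω2) (hpos s ω2)).mp hdiv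
        have hC3 : f s0 ω2 ≤ C * f s0 ω3 :=
          (div_le_iff₀ (hpos s0 ω3)).mp (le_max_right _ _)
        have h23' : f s ω2 ≤ C * f s ω3 := by
          have hp3 := hpos s0 ω3
          have hp : 0 ≤ f s ω3 := (hpos s ω3).le
          nlinarith [mul_le_mul_of_nonneg_left hC3 hp]
        nlinarith [hpos s ω1]
    clear_value C
    set d := min (u a' ω1 - u a'' ω1) (u a' ω3 - u a'' ω3) with hddef
    have hd : 0 < d := lt_min (by linarith) (by linarith)
    have hd1 : d ≤ u a' ω1 - u a'' ω1 := min_le_left _ _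
    have hd3 : d ≤ u a' ω3 - u a'' ω3 := min_le_right _ _
    clear_value d
    set D := u a'' ω2 - u a' ω2 with hDdef
    have hD : 0 < D := by simp only [hDdef]; linarith
    have hu2 : u a' ω2 - u a'' ω2 = -D := by simp only [hDdef]; ring
    clear_value D
    set Sg : ℝ := d + 4 * C * D + 1 with hSgdef
    have hSgpos : 0 < Sg := by positivity
    clear_value Sg
    refine ⟨d / Sg, div_pos hd hSgpos, ?_, ?_, noAdeq⟩
    · rw [div_lt_one hSgpos]; nlinarith [mul_pos hCpos hD]
    · intro s
      set ε := d / Sg with hεdef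
      have hεpos : 0 < ε := div_pos hd hSgpos
      have hεSg : ε * Sg = d := div_mul_cancel₀ d (ne_of_gt hSgpos)
      have hε1 : ε < 1 := by rw [hεdef, div_lt_one hSgpos]; nlinarith [mul_pos hCpos hD]
      clear_value ε
      have h5 : ((1 - ε) * d / 2 - ε * (C * D)) * Sg = d * (2 * C * D + 1) / 2 := by
        linear_combination (-(d / 2) - C * D) * hεSg + (d / 2) * hSgdef
      have hεd : ε * (C * D) < (1 - ε) * d / 2 := by
        by_contra hcon
        push_neg at hcon
        have h6 : 0 ≤ (ε * (C * D) - (1 - ε) * d / 2) * Sg :=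
          mul_nonneg (by linarith) hSgpos.le
        nlinarith [h5, h6, mul_pos hd (mul_pos hCpos hD), hd]
      have hf1 := hpos s ω1
      have hf2 := hpos s ω2
      have hf3 := hpos s ω3
      have hden : 0 < (1 - ε) / 2 * f s ω1 + ε * f s ω2 + (1 - ε) / 2 * f s ω3 := by
        have h1ε : 0 < 1 - ε := by linarith
        positivity
      refine div_pos ?_ hden
      rw [hu2]
      have h1ε : 0 < 1 - ε := by linarith
      have p1 : 0 ≤ (1 - ε) / 2 * f s ω1 * ((u a' ω1 - u a'' ω1) - d) := by
        exact mul_nonneg (by positivity) (by linarith)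
      have p2 : 0 ≤ (1 - ε) / 2 * f s ω3 * ((u a' ω3 - u a'' ω3) - d) := by
        exact mul_nonneg (by positivity) (by linarith)
      have p3 : ε * f s ω2 * D ≤ ε * (C * (f s ω1 + f s ω3)) * D := by
        apply mul_le_mul_of_nonneg_right _ hD.le
        exact mul_le_mul_of_nonneg_left (key s) hεpos.le
      have p4 : (f s ω1 + f s ω3) * (ε * (C * D)) < (f s ω1 + f s ω3) * ((1 - ε) * d / 2) :=
        mul_lt_mul_of_pos_left hεd (by linarith)
      nlinarith [p1, p2, p3, p4]
  · exact ⟨1/2, by norm_num, by norm_num, fun s => (hS ⟨s⟩).elim, noAdeq⟩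
end
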